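/- arXiv:0904.0715 — 3 statements merged into one kernel-verified Lean document; each statement's English description precedes it below -/
import Mathlib

section
/- Let β > 0 and let (I_x)_{x∈ℤ} be real interaction parameters satisfying the symmetry condition I_n = I_{−n+1} for all n ∈ ℤ. Then for every n ∈ ℕ the partition functions satisfy Z_n^+ = (1/2)·( ∏_{i=0}^{n} (1 + e^{−β I_{i+1}})^2 + ∏_{i=0}^{n} (1 − e^{−β I_{i+1}})^2 ) and Z_n^± = (1/2)·( ∏_{i=0}^{n} (1 + e^{−β I_{i+1}})^2 − ∏_{i=0}^{n} (1 − e^{−β I_{i+1}})^2 ). -/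
open Finset

/-- Spin configurations on the box `[-n, n] ⊆ ℤ`, encoded as boolean functions
(`true` ↔ spin `+1`, `false` ↔ spin `-1`). -/
abbrev Config (n : ℕ) := {x // x ∈ Finset.Icc (-(n : ℤ)) (n : ℤ)} → Bool

/-- The spin value `±1` of the configuration `σ` at the site `x` (value `1` off the box). -/
noncomputable def spin {n : ℕ} (σ : Config n) (x : ℤ) : ℝ :=
  if h : x ∈ Finset.Icc (-(n : ℤ)) (n : ℤ) then (if σ ⟨x, h⟩ then 1 else -1) else 1

/-- The Hamiltonian `H_n^+` with plus boundary condition on both sides. -/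
noncomputable def Hplus (I : ℤ → ℝ) (n : ℕ) (σ : Config n) : ℝ :=
  (∑ x ∈ Finset.Icc (-(n : ℤ) + 1) (n : ℤ),
      I x * (if spin σ (x - 1) ≠ spin σ x then 1 else 0))
    + I (-(n : ℤ)) * (if spin σ (-(n : ℤ)) ≠ 1 then 1 else 0)
    + I ((n : ℤ) + 1) * (if spin σ (n : ℤ) ≠ 1 then 1 else 0)

/-- The Hamiltonian `H_n^±` (minus boundary on the left, plus on the right). -/
noncomputable def Hpm (I : ℤ → ℝ) (n : ℕ) (σ : Config n) : ℝ :=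
  Hplus I n σ + I (-(n : ℤ)) * spin σ (-(n : ℤ))

/-- The partition function `Z_n^+`. -/
noncomputable def Zplus (β : ℝ) (I : ℤ → ℝ) (n : ℕ) : ℝ :=
  ∑ σ : Config n, Real.exp (-β * Hplus I n σ)

/-- The partition function `Z_n^±`. -/
noncomputable def Zpm (β : ℝ) (I : ℤ → ℝ) (n : ℕ) : ℝ :=
  ∑ σ : Config n, Real.exp (-β * Hpm I n σ)

/-!
Pass from spins to bond variables `ε_x = 𝟙[σ(x-1) ≠ σ(x)]`, `x ∈ [-n, n+1]`, with the boundary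
spins `σ(±(n+1)) = +1`. The bonds inside the box are free and determine `σ`, while the last bond
is fixed by the parity constraint `∏ (-1)^{ε_x} = 1`. The Boltzmann weight factorises over bonds,
so the partition function is `½ (∏ (w₀ + w₁) + ∏ (w₀ - w₁))`; for `Z^±` the extra term
`I_{-n} σ(-n)` swaps the two weights of the bond `-n`, flipping the sign of the second product.
Finally the symmetry `I_x = I_{1-x}` pairs the bonds `x` and `1 - x`.
-/

namespace Ising

variable {n : ℕ}

/-- Off the box the spins equal `1`, so the bonds `-n` and `n + 1` carry the boundary terms
of `Hplus`. -/
noncomputable def bond (σ : Config n) (x : ℤ) : Bool := decide (spin σ (x - 1) ≠ spin σ x)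

def bondSign (b : Bool) : ℝ := if b then -1 else 1

def bondWeight (a : ℝ) (b : Bool) : ℝ := if b then a else 1

lemma spin_of_notMem (σ : Config n) {x : ℤ} (hx : x ∉ Icc (-(n : ℤ)) n) : spin σ x = 1 :=
  dif_neg hx

lemma spin_eq_one_or_eq_neg_one (σ : Config n) (x : ℤ) : spin σ x = 1 ∨ spin σ x = -1 := by
  unfold spin
  split_ifs <;> simp

lemma spin_mul_self (σ : Config n) (x : ℤ) : spin σ x * spin σ x = 1 := by
  rcases spin_eq_one_or_eq_neg_one σ x with h | h <;> norm_num [h]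

lemma bondSign_bond (σ : Config n) (x : ℤ) :
    bondSign (bond σ x) = spin σ (x - 1) * spin σ x := by
  rcases spin_eq_one_or_eq_neg_one σ (x - 1) with h₁ | h₁ <;>
    rcases spin_eq_one_or_eq_neg_one σ x with h₂ | h₂ <;> norm_num [bond, bondSign, h₁, h₂]

lemma prod_bondSign_bond_Icc (σ : Config n) {b : ℤ} (hb : -(n : ℤ) - 1 ≤ b) :
    ∏ x ∈ Icc (-(n : ℤ)) b, bondSign (bond σ x) = spin σ b := by
  induction b, hb using Int.leInduction with
  | base => simp [spin_of_notMem σ (x := -(n : ℤ) - 1) (by simp)]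
  | succ b hb ih =>
    rw [← Order.succ_eq_add_one, ← Finset.insert_Icc_right_eq_Icc_succ (by simp; omega),
      prod_insert (by simp), Order.succ_eq_add_one, ih, bondSign_bond, add_sub_cancel_right,
      mul_right_comm, spin_mul_self, one_mul]

lemma bondSign_bond_right (σ : Config n) :
    bondSign (bond σ (n + 1)) = ∏ x ∈ Icc (-(n : ℤ)) n, bondSign (bond σ x) := by
  rw [bondSign_bond, add_sub_cancel_right,
    spin_of_notMem σ (x := (n : ℤ) + 1) (by simp), mul_one,
    prod_bondSign_bond_Icc σ (by omega)]

/-- Injective because `spin σ x` is the product of the bond signs up to `x`. -/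
lemma bonds_bijective :
    Function.Bijective fun (σ : Config n) (p : {x // x ∈ Icc (-(n : ℤ)) n}) => bond σ p.1 := by
  refine Finite.injective_iff_bijective.mp fun σ σ' h => funext fun p => ?_
  have hp := mem_Icc.mp p.2
  have hspin : spin σ p.1 = spin σ' p.1 := by
    rw [← prod_bondSign_bond_Icc σ (by omega), ← prod_bondSign_bond_Icc σ' (by omega)]
    refine prod_congr rfl fun y hy => ?_
    have hy := mem_Icc.mp hy
    rw [congrFun h ⟨y, mem_Icc.mpr ⟨hy.1, by omega⟩⟩]
  simp only [spin, dif_pos p.2] at hspin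
  revert hspin
  cases σ p <;> cases σ' p <;> norm_num

lemma sum_prod_bond (v : ℤ → Bool → ℝ) :
    ∑ σ : Config n, ∏ x ∈ Icc (-(n : ℤ)) n, v x (bond σ x)
      = ∏ x ∈ Icc (-(n : ℤ)) n, (v x false + v x true) := by
  simp only [← prod_coe_sort (Icc (-(n : ℤ)) n)]
  rw [bonds_bijective.sum_comp (fun τ => ∏ p, v p.1 (τ p)), ← Fintype.prod_sum]
  simp only [Fintype.sum_bool, add_comm]

/-- The bond `n + 1` is fixed by the parity of the others (`bondSign_bond_right`); splitting
its weight as `2 w b = (w false + w true) + (w false - w true) * bondSign b` leaves two sums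
over free bonds. -/
lemma two_mul_sum_prod_bond (w : ℤ → Bool → ℝ) :
    2 * ∑ σ : Config n, ∏ x ∈ Icc (-(n : ℤ)) (n + 1), w x (bond σ x)
      = ∏ x ∈ Icc (-(n : ℤ)) (n + 1), (w x false + w x true)
        + ∏ x ∈ Icc (-(n : ℤ)) (n + 1), (w x false - w x true) := by
  have hsplit (b : Bool) : 2 * w (n + 1) b
      = (w (n + 1) false + w (n + 1) true) + (w (n + 1) false - w (n + 1) true) * bondSign b := by
    cases b <;> simp only [bondSign, Bool.false_eq_true, if_false, if_true] <;> ring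
  have hIcc : Icc (-(n : ℤ)) (n + 1) = insert ((n : ℤ) + 1) (Icc (-(n : ℤ)) n) := by
    rw [← Order.succ_eq_add_one, Finset.insert_Icc_right_eq_Icc_succ (by simp; omega)]
  have hnot : (n : ℤ) + 1 ∉ Icc (-(n : ℤ)) n := by simp
  calc 2 * ∑ σ : Config n, ∏ x ∈ Icc (-(n : ℤ)) (n + 1), w x (bond σ x)
      = ∑ σ : Config n, ((w (n + 1) false + w (n + 1) true) * ∏ x ∈ Icc (-(n : ℤ)) n, w x (bond σ x)
          + (w (n + 1) false - w (n + 1) true)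
            * ∏ x ∈ Icc (-(n : ℤ)) n, bondSign (bond σ x) * w x (bond σ x)) := by
        rw [mul_sum]
        refine sum_congr rfl fun σ _ => ?_
        rw [hIcc, prod_insert hnot, ← mul_assoc, hsplit, prod_mul_distrib, ← bondSign_bond_right]
        ring
    _ = _ := by
        rw [sum_add_distrib, ← mul_sum, ← mul_sum, sum_prod_bond,
          sum_prod_bond (fun x b => bondSign b * w x b), hIcc, prod_insert hnot, prod_insert hnot]
        simp [bondSign, sub_eq_add_neg]

lemma two_mul_sum_prod_bondWeight (e : ℤ → ℝ) (d : ℤ → Bool) :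
    2 * ∑ σ : Config n, ∏ x ∈ Icc (-(n : ℤ)) (n + 1), bondWeight (e x) (xor (bond σ x) (d x))
      = ∏ x ∈ Icc (-(n : ℤ)) (n + 1), (1 + e x)
        + (∏ x ∈ Icc (-(n : ℤ)) (n + 1), bondSign (d x))
          * ∏ x ∈ Icc (-(n : ℤ)) (n + 1), (1 - e x) := by
  rw [two_mul_sum_prod_bond (fun x b => bondWeight (e x) (xor b (d x))), ← prod_mul_distrib]
  congr 1 <;> refine prod_congr rfl fun x _ => ?_ <;>
    cases d x <;> simp only [bondWeight, bondSign, Bool.false_xor, Bool.true_xor, Bool.not_false,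
      Bool.not_true, if_true, if_false, Bool.false_eq_true] <;> ring

lemma Hplus_eq_sum_bond (I : ℤ → ℝ) (σ : Config n) :
    Hplus I n σ = ∑ x ∈ Icc (-(n : ℤ)) (n + 1), if bond σ x then I x else 0 := by
  have hIcc : Icc (-(n : ℤ)) (n + 1)
      = insert (-(n : ℤ)) (insert ((n : ℤ) + 1) (Icc (-(n : ℤ) + 1) n)) := by
    ext y; simp only [mem_Icc, mem_insert]; omega
  have hleft : spin σ (-(n : ℤ) - 1) = 1 := spin_of_notMem σ (by simp)
  have hright : spin σ ((n : ℤ) + 1) = 1 := spin_of_notMem σ (by simp)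
  rw [hIcc, sum_insert (by simp; omega), sum_insert (by simp), Hplus]
  simp only [bond, hleft, hright, add_sub_cancel_right, ne_comm (a := (1 : ℝ)), mul_ite, mul_one,
    mul_zero, decide_eq_true_eq]
  ring

lemma Hpm_eq_sum_bond (I : ℤ → ℝ) (σ : Config n) :
    Hpm I n σ = ∑ x ∈ Icc (-(n : ℤ)) (n + 1),
      if xor (bond σ x) (decide (x = -(n : ℤ))) then I x else 0 := by
  have hIcc : Icc (-(n : ℤ)) (n + 1) = insert (-(n : ℤ)) (Icc (-(n : ℤ) + 1) (n + 1)) := by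
    ext y; simp only [mem_Icc, mem_insert]; omega
  have hnot : -(n : ℤ) ∉ Icc (-(n : ℤ) + 1) (n + 1) := by simp
  have hspin : spin σ (-(n : ℤ)) = bondSign (bond σ (-(n : ℤ))) := by
    rw [bondSign_bond, spin_of_notMem σ (x := -(n : ℤ) - 1) (by simp), one_mul]
  rw [Hpm, Hplus_eq_sum_bond, hIcc, sum_insert hnot, sum_insert hnot, hspin, add_right_comm]
  congr 1
  · cases bond σ (-(n : ℤ)) <;> simp [bondSign]
  · refine sum_congr rfl fun x hx => ?_
    rw [decide_eq_false (by simp at hx; omega), Bool.xor_false]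

lemma exp_neg_mul_sum_ite {ι : Type*} (s : Finset ι) (β : ℝ) (E : ι → ℝ) (b : ι → Bool) :
    Real.exp (-β * ∑ x ∈ s, if b x then E x else 0)
      = ∏ x ∈ s, bondWeight (Real.exp (-β * E x)) (b x) := by
  rw [mul_sum, Real.exp_sum]
  refine prod_congr rfl fun x _ => ?_
  cases b x <;> simp [bondWeight]

lemma two_mul_Zplus (β : ℝ) (I : ℤ → ℝ) (n : ℕ) :
    2 * Zplus β I n = ∏ x ∈ Icc (-(n : ℤ)) (n + 1), (1 + Real.exp (-β * I x))
      + ∏ x ∈ Icc (-(n : ℤ)) (n + 1), (1 - Real.exp (-β * I x)) := by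
  have h := two_mul_sum_prod_bondWeight (n := n) (fun x => Real.exp (-β * I x)) fun _ => false
  simp only [Bool.xor_false, bondSign, Bool.false_eq_true, if_false, prod_const_one, one_mul] at h
  simpa only [Zplus, Hplus_eq_sum_bond, exp_neg_mul_sum_ite] using h

lemma two_mul_Zpm (β : ℝ) (I : ℤ → ℝ) (n : ℕ) :
    2 * Zpm β I n = ∏ x ∈ Icc (-(n : ℤ)) (n + 1), (1 + Real.exp (-β * I x))
      - ∏ x ∈ Icc (-(n : ℤ)) (n + 1), (1 - Real.exp (-β * I x)) := by
  have h := two_mul_sum_prod_bondWeight (n := n) (fun x => Real.exp (-β * I x))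
    fun x => decide (x = -(n : ℤ))
  have hsign : ∏ x ∈ Icc (-(n : ℤ)) (n + 1), bondSign (decide (x = -(n : ℤ))) = -1 := by
    simp [bondSign, prod_ite_eq', show -(n : ℤ) ≤ n + 1 by omega]
  rw [hsign, neg_one_mul, ← sub_eq_add_neg] at h
  simpa only [Zpm, Hpm_eq_sum_bond, exp_neg_mul_sum_ite] using h

end Ising

lemma prod_Icc_neg_eq_prod_range_sq {M : Type*} [CommMonoid M] (f : ℤ → M)
    (hf : ∀ x, f (1 - x) = f x) (n : ℕ) :
    ∏ x ∈ Icc (-(n : ℤ)) (n + 1), f x = ∏ i ∈ range (n + 1), f (i + 1) ^ 2 := by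
  induction n with
  | zero =>
    have h01 : Icc (0 : ℤ) 1 = {0, 1} := by decide
    simp [h01, ← hf 1, sq]
  | succ n ih =>
    have hIcc : Icc (-((n + 1 : ℕ) : ℤ)) ((n + 1 : ℕ) + 1)
        = insert (-((n + 1 : ℕ) : ℤ))
            (insert (((n + 1 : ℕ) : ℤ) + 1) (Icc (-(n : ℤ)) (n + 1))) := by
      ext y; simp only [mem_Icc, mem_insert]; omega
    rw [hIcc, prod_insert (by simp; omega), prod_insert (by simp), ih, prod_range_succ _ (n + 1),
      ← hf, sub_neg_eq_add, add_comm 1, ← mul_assoc, ← sq, mul_comm]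

theorem stmt_0_general (β : ℝ) (I : ℤ → ℝ)
    (hsym : ∀ n : ℤ, I n = I (-n + 1)) (n : ℕ) :
    Zplus β I n = (1 / 2) *
        ((∏ i ∈ Finset.range (n + 1), (1 + Real.exp (-β * I ((i : ℤ) + 1))) ^ 2)
          + ∏ i ∈ Finset.range (n + 1), (1 - Real.exp (-β * I ((i : ℤ) + 1))) ^ 2) ∧
    Zpm β I n = (1 / 2) *
        ((∏ i ∈ Finset.range (n + 1), (1 + Real.exp (-β * I ((i : ℤ) + 1))) ^ 2)
          - ∏ i ∈ Finset.range (n + 1), (1 - Real.exp (-β * I ((i : ℤ) + 1))) ^ 2) := by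
  have hrefl : ∀ x, Real.exp (-β * I (1 - x)) = Real.exp (-β * I x) := fun x => by
    rw [hsym x, neg_add_eq_sub]
  have hplus := prod_Icc_neg_eq_prod_range_sq (fun x => 1 + Real.exp (-β * I x))
    (fun x => by simp only [hrefl]) n
  have hminus := prod_Icc_neg_eq_prod_range_sq (fun x => 1 - Real.exp (-β * I x))
    (fun x => by simp only [hrefl]) n
  have h₁ := Ising.two_mul_Zplus β I n
  have h₂ := Ising.two_mul_Zpm β I n
  rw [hplus, hminus] at h₁ h₂
  constructor <;> linarith

/-- Proposition 1: under the symmetry condition `I_n = I_{-n+1}`, the partition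
functions `Z_n^+` and `Z_n^±` have the explicit product form (11). -/
theorem stmt_0 (β : ℝ) (hβ : 0 < β) (I : ℤ → ℝ)
    (hsym : ∀ n : ℤ, I n = I (-n + 1)) (n : ℕ) :
    Zplus β I n = (1 / 2) *
        ((∏ i ∈ Finset.range (n + 1), (1 + Real.exp (-β * I ((i : ℤ) + 1))) ^ 2)
          + ∏ i ∈ Finset.range (n + 1), (1 - Real.exp (-β * I ((i : ℤ) + 1))) ^ 2) ∧
    Zpm β I n = (1 / 2) *
        ((∏ i ∈ Finset.range (n + 1), (1 + Real.exp (-β * I ((i : ℤ) + 1))) ^ 2)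
          - ∏ i ∈ Finset.range (n + 1), (1 - Real.exp (-β * I ((i : ℤ) + 1))) ^ 2) :=
  stmt_0_general β I hsym n
end

section
/- Let β > 0 and let (I_x)_{x∈ℤ} satisfy I_n = I_{−n+1} for all n ∈ ℤ. Then for every n ≥ 1 the partition functions satisfy the system of recursive equations Z_n^+ = (1 + e^{−2β I_{n+1}})·Z_{n−1}^+ + 2 e^{−β I_{n+1}}·Z_{n−1}^± and Z_n^± = (1 + e^{−2β I_{n+1}})·Z_{n−1}^± + 2 e^{−β I_{n+1}}·Z_{n−1}^+. -/
/-!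
Replace the boundary spin `+1` in `H_n^+` by arbitrary boundary spins `l` on the left and `r`
on the right; `Z_n^+` and `Z_n^±` are the partition functions for `(l, r) = (1, 1)` and
`(-1, 1)`. Summing out the two outermost spins of the box `[-n, n]` writes the partition function
with boundary `(l, r)` as a combination of the four partition functions on `[-(n-1), n-1]` with
boundary spins `±1`, each disagreement with `l` (resp. `r`) costing a factor `e^{-β I_{-n}}`
(resp. `e^{-β I_{n+1}}`). The symmetry `I_{-n} = I_{n+1}` makes the two factors equal, and the
global spin flip identifies the partition functions with boundaries `(-l, -r)` and `(l, r)`,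
which collapses the four terms into the two of the recursion.
-/

open Finset

namespace Ising

variable {n : ℕ}

lemma sum_Icc_eq_add_sum_add {M : Type*} [AddCommMonoid M] (f : ℤ → M) {a b : ℤ} (h : a < b) :
    ∑ x ∈ Icc a b, f x = f a + ∑ x ∈ Icc (a + 1) (b - 1), f x + f b := by
  rw [← insert_Icc_add_one_left_eq_Icc h.le, sum_insert (by simp),
    ← sub_add_cancel b 1, ← insert_Icc_right_eq_Icc_add_one (by omega),
    sum_insert (by simp), sub_add_cancel, add_comm (f b), add_assoc]

def boolSpin (s : Bool) : ℝ := if s then 1 else -1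

lemma spin_of_mem (σ : Config n) {x : ℤ} (hx : x ∈ Icc (-(n : ℤ)) n) :
    spin σ x = boolSpin (σ ⟨x, hx⟩) := by
  rw [spin, dif_pos hx]
  rfl

noncomputable def hamiltonian (I : ℤ → ℝ) (n : ℕ) (l r : ℝ) (σ : Config n) : ℝ :=
  (∑ x ∈ Icc (-(n : ℤ) + 1) (n : ℤ), I x * (if spin σ (x - 1) ≠ spin σ x then 1 else 0))
    + I (-(n : ℤ)) * (if spin σ (-(n : ℤ)) ≠ l then 1 else 0)
    + I ((n : ℤ) + 1) * (if spin σ (n : ℤ) ≠ r then 1 else 0)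

noncomputable def partitionFunction (β : ℝ) (I : ℤ → ℝ) (n : ℕ) (l r : ℝ) : ℝ :=
  ∑ σ : Config n, Real.exp (-β * hamiltonian I n l r σ)

-- `𝟙[s ≠ 1] + s = 𝟙[s ≠ -1]` for `s = ±1`.
lemma Hpm_eq_hamiltonian (I : ℤ → ℝ) (σ : Config n) :
    Hpm I n σ = hamiltonian I n (-1) 1 σ := by
  rcases spin_eq_one_or_eq_neg_one σ (-(n : ℤ)) with h | h <;>
    norm_num [Hpm, Hplus, hamiltonian, h] <;> ring

lemma Zplus_eq_partitionFunction (β : ℝ) (I : ℤ → ℝ) (n : ℕ) :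
    Zplus β I n = partitionFunction β I n 1 1 :=
  rfl

lemma Zpm_eq_partitionFunction (β : ℝ) (I : ℤ → ℝ) (n : ℕ) :
    Zpm β I n = partitionFunction β I n (-1) 1 := by
  simp only [Zpm, partitionFunction, Hpm_eq_hamiltonian]

noncomputable def extend (a b : Bool) (τ : Config n) : Config (n + 1) := fun x =>
  if h : x.1 ∈ Icc (-(n : ℤ)) n then τ ⟨x.1, h⟩ else if x.1 < 0 then a else b

lemma mem_Icc_succ {x : ℤ} (h₁ : -(n : ℤ) - 1 ≤ x) (h₂ : x ≤ n + 1) :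
    x ∈ Icc (-((n + 1 : ℕ) : ℤ)) ((n + 1 : ℕ) : ℤ) := by
  rw [mem_Icc]; omega

noncomputable def splitConfig (n : ℕ) : Config (n + 1) ≃ Bool × Bool × Config n where
  toFun σ := (σ ⟨-(n : ℤ) - 1, mem_Icc_succ le_rfl (by omega)⟩,
    σ ⟨n + 1, mem_Icc_succ (by omega) le_rfl⟩,
    fun x => σ ⟨x.1, mem_Icc_succ (by grind) (by grind)⟩)
  invFun p := extend p.1 p.2.1 p.2.2
  left_inv σ := by
    funext ⟨x, hx⟩
    rw [mem_Icc] at hx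
    simp only [extend, mem_Icc]
    split_ifs <;> congr 1 <;> ext <;> simp only <;> omega
  right_inv := by
    rintro ⟨a, b, τ⟩
    simp only [extend, mem_Icc, Prod.mk.injEq]
    refine ⟨?_, ?_, ?_⟩
    · rw [dif_neg (by omega), if_pos (by omega)]
    · rw [dif_neg (by omega), if_neg (by omega)]
    · funext ⟨x, hx⟩
      rw [dif_pos (mem_Icc.mp hx)]

lemma sum_config_succ {M : Type*} [AddCommMonoid M] (f : Config (n + 1) → M) :
    ∑ σ, f σ = ∑ a, ∑ b, ∑ τ : Config n, f (extend a b τ) := by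
  rw [← (splitConfig n).symm.sum_comp, Fintype.sum_prod_type, Fintype.sum_congr _ _
    fun a => Fintype.sum_prod_type _]
  rfl

section extend

variable (a b : Bool) (τ : Config n)

lemma spin_extend_of_mem {x : ℤ} (hx : x ∈ Icc (-(n : ℤ)) n) :
    spin (extend a b τ) x = spin τ x := by
  rw [spin_of_mem τ hx, spin_of_mem _ (mem_Icc_succ (by grind) (by grind)), extend, dif_pos hx]

lemma spin_extend_left : spin (extend a b τ) (-((n : ℤ) + 1)) = boolSpin a := by
  rw [spin_of_mem _ (mem_Icc_succ (by omega) (by omega))]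
  dsimp only [extend]
  rw [dif_neg (by rw [mem_Icc]; omega), if_pos (by omega)]

lemma spin_extend_right : spin (extend a b τ) ((n : ℤ) + 1) = boolSpin b := by
  rw [spin_of_mem _ (mem_Icc_succ (by omega) (by omega))]
  dsimp only [extend]
  rw [dif_neg (by rw [mem_Icc]; omega), if_neg (by omega)]

lemma hamiltonian_extend (I : ℤ → ℝ) (l r : ℝ) :
    hamiltonian I (n + 1) l r (extend a b τ) = hamiltonian I n (boolSpin a) (boolSpin b) τ
      + I (-((n + 1 : ℕ) : ℤ)) * (if boolSpin a ≠ l then 1 else 0)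
      + I (((n + 1 : ℕ) : ℤ) + 1) * (if boolSpin b ≠ r then 1 else 0) := by
  have hmid : ∀ x ∈ Icc (-(n : ℤ) + 1) n, spin (extend a b τ) (x - 1) = spin τ (x - 1) ∧
      spin (extend a b τ) x = spin τ x := fun x hx => by
    rw [mem_Icc] at hx
    exact ⟨spin_extend_of_mem a b τ (by rw [mem_Icc]; omega),
      spin_extend_of_mem a b τ (by rw [mem_Icc]; omega)⟩
  unfold hamiltonian
  push_cast
  rw [sum_Icc_eq_add_sum_add _ (by omega), show -((n : ℤ) + 1) + 1 + 1 = -n + 1 by ring,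
    show (n : ℤ) + 1 - 1 = n by ring, show -((n : ℤ) + 1) + 1 - 1 = -((n : ℤ) + 1) by ring,
    show -((n : ℤ) + 1) + 1 = -n by ring,
    sum_congr rfl fun x hx => by rw [(hmid x hx).1, (hmid x hx).2],
    spin_extend_left, spin_extend_right, spin_extend_of_mem a b τ (by rw [mem_Icc]; omega),
    spin_extend_of_mem a b τ (by rw [mem_Icc]; omega)]
  simp only [ne_comm (a := boolSpin a)]
  ring

end extend

lemma spin_not_of_mem (σ : Config n) {x : ℤ} (hx : x ∈ Icc (-(n : ℤ)) n) :
    spin (fun y => !σ y) x = -spin σ x := by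
  rw [spin_of_mem _ hx, spin_of_mem _ hx]
  cases σ ⟨x, hx⟩ <;> norm_num [boolSpin]

lemma hamiltonian_not (I : ℤ → ℝ) (l r : ℝ) (σ : Config n) :
    hamiltonian I n (-l) (-r) (fun y => !σ y) = hamiltonian I n l r σ := by
  have hmid : ∀ x ∈ Icc (-(n : ℤ) + 1) n, spin (fun y => !σ y) (x - 1) = -spin σ (x - 1) ∧
      spin (fun y => !σ y) x = -spin σ x := fun x hx => by
    rw [mem_Icc] at hx
    exact ⟨spin_not_of_mem σ (by rw [mem_Icc]; omega),
      spin_not_of_mem σ (by rw [mem_Icc]; omega)⟩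
  unfold hamiltonian
  rw [sum_congr rfl fun x hx => by rw [(hmid x hx).1, (hmid x hx).2],
    spin_not_of_mem σ (by rw [mem_Icc]; omega), spin_not_of_mem σ (by rw [mem_Icc]; omega)]
  simp only [ne_eq, neg_inj]

lemma partitionFunction_neg (β : ℝ) (I : ℤ → ℝ) (n : ℕ) (l r : ℝ) :
    partitionFunction β I n (-l) (-r) = partitionFunction β I n l r := by
  refine (Fintype.sum_equiv (Equiv.piCongrRight fun _ => Equiv.boolNot) _ _ fun σ => ?_).symm
  rw [← hamiltonian_not I l r σ]
  rfl

lemma partitionFunction_succ (β : ℝ) (I : ℤ → ℝ) (n : ℕ) (l r : ℝ) :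
    partitionFunction β I (n + 1) l r = ∑ a, ∑ b,
      Real.exp (-β * (I (-((n + 1 : ℕ) : ℤ)) * (if boolSpin a ≠ l then 1 else 0)
        + I (((n + 1 : ℕ) : ℤ) + 1) * (if boolSpin b ≠ r then 1 else 0)))
      * partitionFunction β I n (boolSpin a) (boolSpin b) := by
  simp only [partitionFunction, sum_config_succ, hamiltonian_extend, mul_sum, ← Real.exp_add]
  congr! 4
  ring

end Ising

theorem stmt_1_general (β : ℝ) (I : ℤ → ℝ)
    (hsym : ∀ n : ℤ, I n = I (-n + 1)) (n : ℕ) (hn : 1 ≤ n) :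
    Zplus β I n = (1 + Real.exp (-2 * β * I ((n : ℤ) + 1))) * Zplus β I (n - 1)
        + 2 * Real.exp (-β * I ((n : ℤ) + 1)) * Zpm β I (n - 1) ∧
    Zpm β I n = (1 + Real.exp (-2 * β * I ((n : ℤ) + 1))) * Zpm β I (n - 1)
        + 2 * Real.exp (-β * I ((n : ℤ) + 1)) * Zplus β I (n - 1) := by
  obtain ⟨m, rfl⟩ : ∃ m, n = m + 1 := ⟨n - 1, by omega⟩
  have hK : I (-((m + 1 : ℕ) : ℤ)) = I (((m + 1 : ℕ) : ℤ) + 1) := by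
    rw [hsym (_ + 1)]
    ring_nf
  have hflip₁ := Ising.partitionFunction_neg β I m 1 1
  have hflip₂ := Ising.partitionFunction_neg β I m (-1) 1
  rw [neg_neg] at hflip₂
  simp only [Ising.Zplus_eq_partitionFunction, Ising.Zpm_eq_partitionFunction,
    Ising.partitionFunction_succ, Nat.add_sub_cancel, Fintype.sum_bool, Ising.boolSpin, hK]
  norm_num [hflip₁, hflip₂]
  constructor <;> ring_nf

/-- The system of recursive equations (12) for the partition functions
`Z_n^+` and `Z_n^±`, under the symmetry condition `I_n = I_{-n+1}`. -/
theorem stmt_1 (β : ℝ) (hβ : 0 < β) (I : ℤ → ℝ)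
    (hsym : ∀ n : ℤ, I n = I (-n + 1)) (n : ℕ) (hn : 1 ≤ n) :
    Zplus β I n = (1 + Real.exp (-2 * β * I ((n : ℤ) + 1))) * Zplus β I (n - 1)
        + 2 * Real.exp (-β * I ((n : ℤ) + 1)) * Zpm β I (n - 1) ∧
    Zpm β I n = (1 + Real.exp (-2 * β * I ((n : ℤ) + 1))) * Zpm β I (n - 1)
        + 2 * Real.exp (-β * I ((n : ℤ) + 1)) * Zplus β I (n - 1) :=
  stmt_1_general β I hsym n hn
end

section
/- Let β > 0 and let (I_x)_{x∈ℤ} satisfy I_n = I_{−n+1} for all n ∈ ℤ. Then for every n ∈ ℕ the difference and sum of the partition functions are given by the products X_n := Z_n^+ − Z_n^± = ∏_{i=0}^{n} (1 − e^{−β I_{i+1}})^2 and Y_n := Z_n^+ + Z_n^± = ∏_{i=0}^{n} (1 + e^{−β I_{i+1}})^2. -/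
open Finset

/-!
Reading the box from left to right, the Boltzmann weight of a configuration is a product of
factors `w_x = exp (-β I_x)`, one for each bond `x` across which the spin flips, the spin to the
right of the box being `+`. The two partition functions differ only in the boundary condition on
the left, so for `t = ±1` the combination `Z⁺ + t Z^±` is a chain sum with a free left end twisted
by `t`. Summing out the spins one at a time from the left — each either agrees with its right
neighbour or costs a factor `w` — gives `Z⁺ + t Z^± = ∏_{x=-n}^{n+1} (1 + t w_x)`. Finally the
symmetry `I_x = I_{1-x}` pairs the bond `x` with the bond `1 - x`, producing the squares.
-/

open Real

section Chain

variable {m : ℕ}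

/-- A chain of `m` spins at the sites `0, …, m - 1`, with a `+` spin at every site `j ≥ m`. -/
def chainSpin (σ : Fin m → Bool) (j : ℕ) : Bool :=
  if h : j < m then σ ⟨j, h⟩ else true

noncomputable def chainWeight (w : ℕ → ℝ) (σ : Fin m → Bool) : ℝ :=
  ∏ i ∈ range m, if chainSpin σ i ≠ chainSpin σ (i + 1) then w i else 1

lemma chainSpin_of_le {σ : Fin m → Bool} {j : ℕ} (h : m ≤ j) : chainSpin σ j = true := by
  simp [chainSpin, h]

@[simp]
lemma chainSpin_cons_zero (s : Bool) (σ : Fin m → Bool) :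
    chainSpin (Fin.cons s σ : Fin (m + 1) → Bool) 0 = s := by
  simp [chainSpin]

@[simp]
lemma chainSpin_cons_succ (s : Bool) (σ : Fin m → Bool) (j : ℕ) :
    chainSpin (Fin.cons s σ : Fin (m + 1) → Bool) (j + 1) = chainSpin σ j := by
  unfold chainSpin
  by_cases h : j < m
  · rw [dif_pos (by omega), dif_pos h]
    exact Fin.cons_succ (α := fun _ => Bool) s σ ⟨j, h⟩
  · rw [dif_neg (by omega), dif_neg h]

lemma chainWeight_cons (w : ℕ → ℝ) (s : Bool) (σ : Fin m → Bool) :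
    chainWeight w (Fin.cons s σ : Fin (m + 1) → Bool) =
      (if s ≠ chainSpin σ 0 then w 0 else 1) * chainWeight (fun i => w (i + 1)) σ := by
  simp only [chainWeight, prod_range_succ', chainSpin_cons_zero, chainSpin_cons_succ]
  ring

lemma sum_fun_fin_succ {M α : Type*} [AddCommMonoid M] [Fintype α] (f : (Fin (m + 1) → α) → M) :
    ∑ σ, f σ = ∑ s, ∑ σ : Fin m → α, f (Fin.cons s σ) := by
  rw [← (Fin.consEquiv fun _ => α).sum_comp f, Fintype.sum_prod_type]
  rfl

/-- Summing out the leftmost spin: when `t ^ 2 = 1`, both values of the neighbouring spin give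
the same factor `1 + t * w 0`. -/
lemma sum_chainWeight {t : ℝ} (ht : t ^ 2 = 1) (w : ℕ → ℝ) :
    ∑ σ : Fin m → Bool, (if chainSpin σ 0 then 1 else t) * chainWeight w σ =
      ∏ i ∈ range m, (1 + t * w i) := by
  induction m generalizing w with
  | zero => simp [chainSpin, chainWeight]
  | succ m ih =>
    have hcons : ∀ σ : Fin m → Bool,
        ∑ s : Bool, (if s then 1 else t) *
          ((if s ≠ chainSpin σ 0 then w 0 else 1) * chainWeight (fun i => w (i + 1)) σ) =
        (1 + t * w 0) * ((if chainSpin σ 0 then 1 else t) * chainWeight (fun i => w (i + 1)) σ) := by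
      intro σ
      set W := chainWeight (fun i => w (i + 1)) σ
      cases chainSpin σ 0 <;>
        simp only [Fintype.sum_bool, ne_eq, Bool.true_eq_false, Bool.false_eq_true,
          not_true_eq_false, not_false_eq_true, if_true, if_false]
      · linear_combination -w 0 * W * ht
      · ring
    simp only [sum_fun_fin_succ, chainSpin_cons_zero, chainWeight_cons]
    rw [sum_comm, sum_congr rfl fun σ _ => hcons σ, ← mul_sum, ih, prod_range_succ']
    ring

end Chain

def signOf (b : Bool) : ℝ := if b then 1 else -1

lemma signOf_injective : Function.Injective signOf := by
  intro a b
  cases a <;> cases b <;> norm_num [signOf]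

lemma exp_neg_mul_mul_ite (β a : ℝ) (p : Prop) [Decidable p] :
    exp (-β * (a * if p then 1 else 0)) = if p then exp (-β * a) else 1 := by
  split_ifs <;> simp

section Box

variable {n : ℕ}

def boxEquiv (n : ℕ) : Fin (2 * n + 1) ≃ {x // x ∈ Icc (-(n : ℤ)) n} where
  toFun j := ⟨-n + j, by rw [mem_Icc]; omega⟩
  invFun x := ⟨(x.1 + n).toNat, by have := mem_Icc.1 x.2; omega⟩
  left_inv j := Fin.ext (by simp only; omega)
  right_inv x := Subtype.ext (by have := mem_Icc.1 x.2; simp only; omega)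

def boxConfig (n : ℕ) : (Fin (2 * n + 1) → Bool) ≃ Config n :=
  (boxEquiv n).arrowCongr (Equiv.refl Bool)

lemma spin_boxConfig (τ : Fin (2 * n + 1) → Bool) (j : ℕ) :
    spin (boxConfig n τ) (-n + j) = signOf (chainSpin τ j) := by
  unfold spin chainSpin
  by_cases hj : j < 2 * n + 1
  · have hx : -(n : ℤ) + j ∈ Icc (-(n : ℤ)) n := by rw [mem_Icc]; omega
    have hsymm : (boxEquiv n).symm ⟨-n + j, hx⟩ = ⟨j, hj⟩ := (boxEquiv n).symm_apply_eq.2 rfl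
    rw [dif_pos hx, dif_pos hj]
    simp [boxConfig, hsymm, signOf]
  · have hx : -(n : ℤ) + j ∉ Icc (-(n : ℤ)) n := by rw [mem_Icc]; omega
    rw [dif_neg hx, dif_neg hj]
    rfl

lemma bond_boxConfig (τ : Fin (2 * n + 1) → Bool) (j : ℕ) :
    (if spin (boxConfig n τ) (-n + j) ≠ spin (boxConfig n τ) (-n + ↑(j + 1)) then (1 : ℝ) else 0) =
      if chainSpin τ j ≠ chainSpin τ (j + 1) then 1 else 0 := by
  simp only [spin_boxConfig, signOf_injective.ne_iff]

lemma Hplus_boxConfig (I : ℤ → ℝ) (τ : Fin (2 * n + 1) → Bool) :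
    Hplus I n (boxConfig n τ) =
      I (-n) * (if chainSpin τ 0 then 0 else 1) + ∑ j ∈ range (2 * n + 1),
        I (-n + ↑(j + 1)) * if chainSpin τ j ≠ chainSpin τ (j + 1) then 1 else 0 := by
  have hIcc : Icc (-(n : ℤ) + 1) n =
      (range (2 * n)).map (Nat.castEmbedding.trans (addLeftEmbedding (-(n : ℤ) + 1))) := by
    rw [Int.Icc_eq_finset_map]; congr; omega
  have hleft : (if spin (boxConfig n τ) (-n) ≠ 1 then (1 : ℝ) else 0) =
      if chainSpin τ 0 then 0 else 1 := by
    rw [show -(n : ℤ) = -n + ((0 : ℕ) : ℤ) by simp, spin_boxConfig]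
    cases chainSpin τ 0 <;> norm_num [signOf]
  -- the right boundary term is the last bond of the chain, ending at the `+` spin outside the box
  have hright : I (n + 1) * (if spin (boxConfig n τ) n ≠ 1 then 1 else 0) =
      I (-n + ↑(2 * n + 1)) * if chainSpin τ (2 * n) ≠ chainSpin τ (2 * n + 1) then 1 else 0 := by
    rw [← bond_boxConfig, spin_boxConfig τ (2 * n + 1), chainSpin_of_le le_rfl,
      show spin (boxConfig n τ) n = spin (boxConfig n τ) (-n + ↑(2 * n)) by congr 1; push_cast; ring,
      show (n : ℤ) + 1 = -n + ↑(2 * n + 1) by push_cast; ring]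
    rfl
  have hbulk : ∀ j : ℕ, I (-n + 1 + j) *
      (if spin (boxConfig n τ) (-n + 1 + j - 1) ≠ spin (boxConfig n τ) (-n + 1 + j) then 1 else 0) =
      I (-n + ↑(j + 1)) * if chainSpin τ j ≠ chainSpin τ (j + 1) then 1 else 0 := by
    intro j
    rw [show -(n : ℤ) + 1 + j - 1 = -n + j by ring,
      show -(n : ℤ) + 1 + j = -n + ↑(j + 1) by push_cast; ring, bond_boxConfig]
  simp only [Hplus, hIcc, sum_map, hleft, hright, sum_range_succ,
    Function.Embedding.trans_apply, Nat.castEmbedding_apply, addLeftEmbedding_apply, hbulk]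
  ring

lemma exp_neg_Hplus_boxConfig (β : ℝ) (I : ℤ → ℝ) (τ : Fin (2 * n + 1) → Bool) :
    exp (-β * Hplus I n (boxConfig n τ)) = (if chainSpin τ 0 then 1 else exp (-β * I (-n))) *
      chainWeight (fun j => exp (-β * I (-n + ↑(j + 1)))) τ := by
  rw [Hplus_boxConfig, mul_add, exp_add, mul_sum, exp_sum, chainWeight]
  simp only [exp_neg_mul_mul_ite]
  congr 1
  cases chainSpin τ 0 <;> simp

lemma exp_neg_Hpm_boxConfig (β : ℝ) (I : ℤ → ℝ) (τ : Fin (2 * n + 1) → Bool) :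
    exp (-β * Hpm I n (boxConfig n τ)) = (if chainSpin τ 0 then exp (-β * I (-n)) else 1) *
      chainWeight (fun j => exp (-β * I (-n + ↑(j + 1)))) τ := by
  have hspin : spin (boxConfig n τ) (-n) = signOf (chainSpin τ 0) := by
    simpa using spin_boxConfig τ 0
  rw [Hpm, mul_add, exp_add, exp_neg_Hplus_boxConfig, hspin]
  cases chainSpin τ 0
  · simp only [signOf, Bool.false_eq_true, if_false]
    rw [mul_right_comm, ← exp_add, show -β * I (-n) + -β * (I (-n) * -1) = 0 by ring, exp_zero]
  · simp only [signOf, if_true, mul_one, one_mul]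
    ring

end Box

lemma Zplus_add_mul_Zpm (β : ℝ) (I : ℤ → ℝ) (n : ℕ) {t : ℝ} (ht : t ^ 2 = 1) :
    Zplus β I n + t * Zpm β I n = ∏ x ∈ Icc (-(n : ℤ)) (n + 1), (1 + t * exp (-β * I x)) := by
  have hconfig : ∀ τ : Fin (2 * n + 1) → Bool,
      exp (-β * Hplus I n (boxConfig n τ)) + t * exp (-β * Hpm I n (boxConfig n τ)) =
        (1 + t * exp (-β * I (-n))) * ((if chainSpin τ 0 then 1 else t) *
          chainWeight (fun j => exp (-β * I (-n + ↑(j + 1)))) τ) := by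
    intro τ
    rw [exp_neg_Hplus_boxConfig, exp_neg_Hpm_boxConfig]
    cases chainSpin τ 0
    · simp only [Bool.false_eq_true, if_false]
      linear_combination
        -(exp (-β * I (-n)) * chainWeight (fun j => exp (-β * I (-n + ↑(j + 1)))) τ) * ht
    · simp only [if_true]
      ring
  rw [Zplus, Zpm, mul_sum, ← sum_add_distrib, ← (boxConfig n).sum_comp,
    sum_congr rfl fun τ _ => hconfig τ, ← mul_sum, sum_chainWeight ht, Int.Icc_eq_finset_map,
    prod_map, show ((n : ℤ) + 1 + 1 - -n).toNat = 2 * n + 1 + 1 by omega,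
    prod_range_succ' _ (2 * n + 1)]
  simp only [Function.Embedding.trans_apply, Nat.castEmbedding_apply, addLeftEmbedding_apply,
    Nat.cast_zero, add_zero, mul_comm]

lemma prod_Icc_eq_prod_sq_of_reflect {M : Type*} [CommMonoid M] (F : ℤ → M)
    (hF : ∀ x, F (1 - x) = F x) (n : ℕ) :
    ∏ x ∈ Icc (-(n : ℤ)) (n + 1), F x = ∏ i ∈ range (n + 1), F ((i : ℤ) + 1) ^ 2 := by
  have hsplit : Icc (-(n : ℤ)) (n + 1) = Icc (-(n : ℤ)) 0 ∪ Icc 1 (n + 1) := by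
    ext x; simp only [mem_union, mem_Icc]; omega
  have hdisj : Disjoint (Icc (-(n : ℤ)) 0) (Icc 1 (n + 1)) :=
    disjoint_left.2 fun x => by simp only [mem_Icc]; omega
  have hreflect : ∏ x ∈ Icc (-(n : ℤ)) 0, F x = ∏ x ∈ Icc (1 : ℤ) (n + 1), F x :=
    prod_nbij' (1 - ·) (1 - ·) (fun x hx => by simp only [mem_Icc] at hx ⊢; omega)
      (fun x hx => by simp only [mem_Icc] at hx ⊢; omega) (fun x _ => by simp)
      (fun x _ => by simp) (fun x _ => (hF x).symm)
  rw [hsplit, prod_union hdisj, hreflect, ← sq, ← prod_pow, Int.Icc_eq_finset_map, prod_map,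
    show ((n : ℤ) + 1 + 1 - 1).toNat = n + 1 by omega]
  simp only [Function.Embedding.trans_apply, Nat.castEmbedding_apply, addLeftEmbedding_apply,
    add_comm]

theorem stmt_2_general (β : ℝ) (I : ℤ → ℝ)
    (hsym : ∀ n : ℤ, I n = I (-n + 1)) (n : ℕ) :
    Zplus β I n - Zpm β I n
        = ∏ i ∈ Finset.range (n + 1), (1 - Real.exp (-β * I ((i : ℤ) + 1))) ^ 2 ∧
    Zplus β I n + Zpm β I n
        = ∏ i ∈ Finset.range (n + 1), (1 + Real.exp (-β * I ((i : ℤ) + 1))) ^ 2 := by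
  have hprod : ∀ t : ℝ, t ^ 2 = 1 → Zplus β I n + t * Zpm β I n =
      ∏ i ∈ range (n + 1), (1 + t * exp (-β * I ((i : ℤ) + 1))) ^ 2 := by
    intro t ht
    rw [Zplus_add_mul_Zpm β I n ht]
    exact prod_Icc_eq_prod_sq_of_reflect _ (fun x => by rw [hsym x, neg_add_eq_sub]) n
  constructor
  · simpa [sub_eq_add_neg] using hprod (-1) (by norm_num)
  · simpa using hprod 1 (by norm_num)

/-- Equations (13): the difference `X_n = Z_n^+ - Z_n^±` and the sum
`Y_n = Z_n^+ + Z_n^±` are explicit products, under the symmetry condition. -/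
theorem stmt_2 (β : ℝ) (hβ : 0 < β) (I : ℤ → ℝ)
    (hsym : ∀ n : ℤ, I n = I (-n + 1)) (n : ℕ) :
    Zplus β I n - Zpm β I n
        = ∏ i ∈ Finset.range (n + 1), (1 - Real.exp (-β * I ((i : ℤ) + 1))) ^ 2 ∧
    Zplus β I n + Zpm β I n
        = ∏ i ∈ Finset.range (n + 1), (1 + Real.exp (-β * I ((i : ℤ) + 1))) ^ 2 :=
  stmt_2_general β I hsym n
end
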